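/- arXiv:2504.07435 — 2 statements merged into one kernel-verified Lean document; each statement's English description precedes it below -/
import Mathlib

section
/- Converse direction of Theorem 3: if C : [0, A] → ℝ is convex, strictly increasing, differentiable with C(0) = 0, and there exists a point a₀ ∈ [0, A] with C'(a₀) > b·k, then the payoff P(a) = b·k·a − C(a) satisfies P(a₀') > P(A) for some a₀' < A; hence A is not the argmax and PPS is not OCD-IC. -/
/-!
For a convex differentiable cost the marginal cost is monotone, so `C'(a₀) > b·k` forces
`C'(A) > b·k`. Secant slopes into `A` from the left tend to `C'(A)`, so some `a' < A` has
`(C A - C a') / (A - a') > b·k`: the cost saved by stepping back from `A` to `a'` exceeds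
the reward `b·k·(A - a')` lost.
-/

open Set Filter Topology

theorem HasDerivAt.exists_mem_Ioo_lt_slope {f : ℝ → ℝ} {f' c a b : ℝ}
    (hf : HasDerivAt f f' b) (hc : c < f') (hab : a < b) :
    ∃ x ∈ Ioo a b, c < slope f x b := by
  have hslope : Tendsto (slope f b) (𝓝[<] b) (𝓝 f') :=
    (hasDerivWithinAt_iff_tendsto_slope' self_notMem_Iio).mp hf.hasDerivWithinAt
  have hnear : ∀ᶠ x in 𝓝[<] b, x ∈ Ioo a b := eventually_mem_set.mpr (Ioo_mem_nhdsLT hab)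
  obtain ⟨x, hx, hcx⟩ := (hnear.and (hslope.eventually (eventually_gt_nhds hc))).exists
  exact ⟨x, hx, slope_comm f x b ▸ hcx⟩

theorem sub_lt_sub_of_lt_slope {f : ℝ → ℝ} {c x y : ℝ} (hxy : x < y) (h : c < slope f x y) :
    c * y - f y < c * x - f x := by
  rw [slope_def_field, lt_div_iff₀ (sub_pos.mpr hxy)] at h
  linarith

theorem pps_not_ocdic_converse_general (b k A : ℝ) (C : ℝ → ℝ)
    (hA : 0 < A)
    (hconv : ConvexOn ℝ (Icc (0:ℝ) A) C)
    (hdiff : ∀ a ∈ Icc (0:ℝ) A, DifferentiableAt ℝ C a)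
    (a₀ : ℝ) (ha₀ : a₀ ∈ Icc (0:ℝ) A) (hbig : b * k < deriv C a₀) :
    ∃ a' ∈ Icc (0:ℝ) A, a' < A ∧ b * k * A - C A < b * k * a' - C a' := by
  have hAmem : A ∈ Icc (0:ℝ) A := right_mem_Icc.mpr hA.le
  have hbigA : b * k < deriv C A :=
    hbig.trans_le (hconv.monotoneOn_deriv hdiff ha₀ hAmem ha₀.2)
  obtain ⟨a', ha', hslope⟩ := (hdiff A hAmem).hasDerivAt.exists_mem_Ioo_lt_slope hbigA hA
  exact ⟨a', Ioo_subset_Icc_self ha', ha'.2, sub_lt_sub_of_lt_slope ha'.2 hslope⟩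

/-- converse direction of Theorem 3: if the convex, strictly increasing,
differentiable cost C has C'(a₀) > b·k at some a₀ ∈ [0,A], then some a' < A beats A,
so A is not the argmax of P(a) = b·k·a − C(a) and PPS is not OCD-IC. -/
theorem pps_not_ocdic_converse (b k A : ℝ) (C : ℝ → ℝ)
    (hb : 0 < b) (hk : 0 < k) (hA : 0 < A)
    (hconv : ConvexOn ℝ (Icc (0:ℝ) A) C)
    (hmono : StrictMonoOn C (Icc (0:ℝ) A))
    (hdiff : ∀ a ∈ Icc (0:ℝ) A, DifferentiableAt ℝ C a)
    (hC0 : C 0 = 0)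
    (a₀ : ℝ) (ha₀ : a₀ ∈ Icc (0:ℝ) A) (hbig : b * k < deriv C a₀) :
    ∃ a' ∈ Icc (0:ℝ) A, a' < A ∧ b * k * A - C A < b * k * a' - C a' :=
  pps_not_ocdic_converse_general b k A C hA hconv hdiff a₀ ha₀ hbig
end

section
/- The function g(D) = c·D / (1 − (m/D)·e^{1 − m/D}) for constants c > 0, m > 0, defined on D > m, is convex in D. -/
open Set

section PPSSProofAux
open Real

namespace PPSSAux

noncomputable def E (m D : ℝ) : ℝ := Real.exp (1 - m / D)
noncomputable def K (m D : ℝ) : ℝ := 1 - m / D * E m D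
noncomputable def K1 (m D : ℝ) : ℝ := m * (D - m) / D ^ 3 * E m D
noncomputable def K2 (m D : ℝ) : ℝ :=
  m * (3 * m - 2 * D) / D ^ 4 * E m D + m * (D - m) / D ^ 3 * (m / D ^ 2 * E m D)

lemma hasDerivAt_inner (m D : ℝ) (hD : D ≠ 0) :
    HasDerivAt (fun x : ℝ => 1 - m / x) (m / D ^ 2) D := by
  simp only [div_eq_mul_inv]
  have h := ((hasDerivAt_inv hD).const_mul m).const_sub 1
  exact h.congr_deriv (by ring)

lemma hasDerivAt_mdiv (m D : ℝ) (hD : D ≠ 0) :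
    HasDerivAt (fun x : ℝ => m / x) (-(m / D ^ 2)) D := by
  simp only [div_eq_mul_inv]
  have h := (hasDerivAt_inv hD).const_mul m
  exact h.congr_deriv (by ring)

lemma hasDerivAt_E (m D : ℝ) (hD : D ≠ 0) :
    HasDerivAt (E m) (m / D ^ 2 * E m D) D := by
  have h := (hasDerivAt_inner m D hD).exp
  unfold E
  convert h using 1
  ring

lemma hasDerivAt_K (m D : ℝ) (hD : D ≠ 0) :
    HasDerivAt (K m) (K1 m D) D := by
  have h := ((hasDerivAt_mdiv m D hD).mul (hasDerivAt_E m D hD)).const_sub 1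
  unfold K K1
  exact h.congr_deriv (by field_simp; ring)

lemma hasDerivAt_K1 (m D : ℝ) (hD : D ≠ 0) :
    HasDerivAt (K1 m) (K2 m D) D := by
  have hnum : HasDerivAt (fun x : ℝ => m * (x - m)) m D := by
    simpa using ((hasDerivAt_id D).sub_const m).const_mul m
  have hden : HasDerivAt (fun x : ℝ => x ^ 3) (3 * D ^ 2) D := by
    simpa using hasDerivAt_pow 3 D
  have hr := hnum.div hden (pow_ne_zero 3 hD)
  have h := hr.mul (hasDerivAt_E m D hD)
  unfold K1 K2
  exact h.congr_deriv (by simp only [Pi.div_apply]; field_simp; ring)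

end PPSSAux

namespace PPSSAux2
open PPSSAux

noncomputable def g (c m D : ℝ) : ℝ := c * D / K m D
noncomputable def g1 (c m D : ℝ) : ℝ := (c * K m D - c * D * K1 m D) / (K m D) ^ 2
noncomputable def g2 (c m D : ℝ) : ℝ :=
  ((c * K1 m D - (c * K1 m D + c * D * K2 m D)) * (K m D) ^ 2 -
    (c * K m D - c * D * K1 m D) * (2 * K m D ^ 1 * K1 m D)) / ((K m D) ^ 2) ^ 2

lemma K_pos (m D : ℝ) (hm : 0 < m) (hD : m < D) : 0 < K m D := by
  have hD0 : 0 < D := hm.trans hD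
  have hu1 : m / D < 1 := (div_lt_one hD0).mpr hD
  have hu0 : 0 < m / D := div_pos hm hD0
  have hne : m / D - 1 ≠ 0 := sub_ne_zero.mpr (ne_of_lt hu1)
  have h := Real.add_one_lt_exp hne
  -- m/D < exp (m/D - 1)
  have h2 : m / D < Real.exp (m / D - 1) := by linarith
  have hE : 0 < Real.exp (1 - m / D) := Real.exp_pos _
  have : m / D * Real.exp (1 - m / D) < Real.exp (m / D - 1) * Real.exp (1 - m / D) :=
    (mul_lt_mul_of_pos_right h2 hE)
  rw [← Real.exp_add] at this
  simp only [show m / D - 1 + (1 - m / D) = 0 by ring, Real.exp_zero] at this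
  unfold K E
  linarith

lemma hasDerivAt_g (c m D : ℝ) (hD : D ≠ 0) (hK : K m D ≠ 0) :
    HasDerivAt (g c m) (g1 c m D) D := by
  have hnum : HasDerivAt (fun x : ℝ => c * x) c D := by
    simpa using (hasDerivAt_id D).const_mul c
  have h := hnum.div (hasDerivAt_K m D hD) hK
  unfold g g1
  exact h

lemma hasDerivAt_g1 (c m D : ℝ) (hD : D ≠ 0) (hK : K m D ≠ 0) :
    HasDerivAt (g1 c m) (g2 c m D) D := by
  have hnum : HasDerivAt (fun x : ℝ => c * K m x - c * x * K1 m x)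
      (c * K1 m D - (c * K1 m D + c * D * K2 m D)) D := by
    have h1 := (hasDerivAt_K m D hD).const_mul c
    have h2 := (((hasDerivAt_id D).const_mul c).mul (hasDerivAt_K1 m D hD))
    have h3 := h1.sub h2
    exact h3.congr_deriv (by simp only [id_eq, mul_one])
  have hden : HasDerivAt (fun x : ℝ => (K m x) ^ 2) (2 * K m D ^ 1 * K1 m D) D :=
    (hasDerivAt_K m D hD).pow 2
  exact hnum.div hden (pow_ne_zero 2 hK)

lemma g2_eq (c m D : ℝ) (hD : D ≠ 0) (hK : K m D ≠ 0) :
    g2 c m D = c * E m D * m ^ 2 *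
      (E m D * (m ^ 2 - 2 * m * D + 2 * D ^ 2) - (2 * D - m) * D) /
      (D ^ 5 * (K m D) ^ 3) := by
  have hK' : (1 : ℝ) - m / D * E m D ≠ 0 := hK
  have hB : ((K m D ^ 2) ^ 2 : ℝ) ≠ 0 := pow_ne_zero 2 (pow_ne_zero 2 hK)
  have hDn : (D ^ 5 * (K m D) ^ 3 : ℝ) ≠ 0 :=
    mul_ne_zero (pow_ne_zero 5 hD) (pow_ne_zero 3 hK)
  unfold g2
  rw [div_eq_div_iff hB hDn]
  unfold K K1 K2
  field_simp
  ring

lemma g2_nonneg (c m D : ℝ) (hc : 0 < c) (hm : 0 < m) (hD : m < D) :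
    0 ≤ g2 c m D := by
  have hD0 : 0 < D := hm.trans hD
  have hK := K_pos m D hm hD
  rw [g2_eq c m D (ne_of_gt hD0) (ne_of_gt hK)]
  have hE : 0 < E m D := Real.exp_pos _
  have hlin : 2 - m / D ≤ E m D := by
    have h := Real.add_one_le_exp (1 - m / D)
    unfold E; linarith
  have hP : (2 * D - m) * D ≤ E m D * (m ^ 2 - 2 * m * D + 2 * D ^ 2) := by
    have hmul := mul_le_mul_of_nonneg_right hlin (sq_nonneg D)
    have hd2 : m / D * D ^ 2 = m * D := by field_simp
    have h4 : 0 ≤ E m D * (m - D) ^ 2 := mul_nonneg hE.le (sq_nonneg _)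
    nlinarith [hmul, hd2, h4]
  apply div_nonneg
  · have h5 : 0 ≤ c * E m D * m ^ 2 := by positivity
    exact mul_nonneg h5 (sub_nonneg.mpr hP)
  · positivity

end PPSSAux2

open PPSSAux PPSSAux2


/-- the PPSS subsidy function g(D) = c·D / (1 − (m/D)e^{1−m/D})
is convex on (m, ∞) for constants c, m > 0. -/
theorem ppss_subsidy_convex (c m : ℝ) (hc : 0 < c) (hm : 0 < m) :
    ConvexOn ℝ (Ioi m)
      (fun D : ℝ => c * D / (1 - (m / D) * Real.exp (1 - m / D))) := by
  show ConvexOn ℝ (Ioi m) (g c m)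
  have hDne : ∀ x ∈ Ioi m, x ≠ 0 := fun x hx => ne_of_gt (hm.trans hx)
  have hKne : ∀ x ∈ Ioi m, K m x ≠ 0 := fun x hx => ne_of_gt (K_pos m x hm hx)
  have hderiv : ∀ x ∈ Ioi m, deriv (g c m) x = g1 c m x := fun x hx =>
    (hasDerivAt_g c m x (hDne x hx) (hKne x hx)).deriv
  have heq : ∀ x ∈ Ioi m, deriv (g c m) =ᶠ[nhds x] g1 c m := by
    intro x hx
    filter_upwards [isOpen_Ioi.mem_nhds hx] with y hy using hderiv y hy
  apply convexOn_of_deriv2_nonneg' (convex_Ioi m)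
  · intro x hx
    exact ((hasDerivAt_g c m x (hDne x hx) (hKne x hx)).differentiableAt).differentiableWithinAt
  · intro x hx
    have h1 : DifferentiableAt ℝ (g1 c m) x :=
      (hasDerivAt_g1 c m x (hDne x hx) (hKne x hx)).differentiableAt
    exact (h1.congr_of_eventuallyEq (heq x hx)).differentiableWithinAt
  · intro x hx
    have h2 : deriv^[2] (g c m) x = deriv (deriv (g c m)) x := by
      simp [Function.iterate_succ, Function.iterate_one]
    rw [h2, (heq x hx).deriv_eq,
      (hasDerivAt_g1 c m x (hDne x hx) (hKne x hx)).deriv]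
    exact g2_nonneg c m x hc hm hx


end PPSSProofAux
end
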